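/- Suppose β is an 𝒮-measurable real random variable satisfying the marginal excursion effect model: e^{−β} · E[ p⁻¹ · E[A·Π·Y | ℋ] | 𝒮 ] = E[ (1−p)⁻¹ · E[(1−A)·Π·Y | ℋ] | 𝒮 ] almost surely, where Π := ∏_{j=1}^{Δ−1} (1 − A_j)/(1 − p_j). Let c be any ℋ-measurable real random variable, S any 𝒮-measurable real random variable, and define the weight J := (p̃/p)^{A} · ((1 − p̃)/(1 − p))^{1−A} · Π. Then, assuming all displayed expressions are integrable, E[ e^{−Aβ} · (Y − e^{c + Aβ}) · J · (A − p̃) · S ] = 0; i.e., each summand of the marginal estimating function m_M has mean zero regardless of whether the working model c is correctly specified and for any choice of 𝒮-measurable centering probability p̃. -/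

import Mathlib

open MeasureTheory Real

variable {Ω : Type*}

/-- `Π := ∏_{j=1}^{Δ−1} (1 − A_j)/(1 − p_j)`, where `p_j := E[A_j | ℳ_j]`
(empty product `= 1` when `Δ = 1`). -/
noncomputable def PiProd {m0 : MeasurableSpace Ω} (μ : Measure Ω)
    (M : ℕ → MeasurableSpace Ω) (Δ : ℕ) (Aseq : ℕ → Ω → ℝ) : Ω → ℝ :=
  fun ω => ∏ j ∈ Finset.Icc 1 (Δ - 1), (1 - Aseq j ω) / (1 - (μ[Aseq j|M j]) ω)

/-- `J := (p̃/p)^A · ((1 − p̃)/(1 − p))^{1−A} · Π`, where `p := E[A | ℋ]`. -/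
noncomputable def Jweight {m0 : MeasurableSpace Ω} (μ : Measure Ω)
    (mH : MeasurableSpace Ω) (M : ℕ → MeasurableSpace Ω) (Δ : ℕ)
    (A : Ω → ℝ) (Aseq : ℕ → Ω → ℝ) (ptil : Ω → ℝ) : Ω → ℝ :=
  fun ω => (ptil ω / (μ[A|mH]) ω) ^ (A ω) *
    ((1 - ptil ω) / (1 - (μ[A|mH]) ω)) ^ (1 - A ω) * PiProd μ M Δ Aseq ω

open Filter

/-!
Since `A ∈ {0, 1}`, the summand equals `K (e^{-β} U₁ - U₀) - K e^c Z` with `K = p̃ (1 - p̃) S`,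
`U₁ = A Π Y / p`, `U₀ = (1 - A) Π Y / (1 - p)` and `Z = A Π / p - (1 - A) Π / (1 - p)`.
Each factor `(1 - A_j) / (1 - p_j)` of `Π` has conditional mean one given `ℳ_j` and is
`ℳ_{j+1}`-measurable, so `E[Π | ℳ₁] = 1` by telescoping. Hence `E[A Π | ℋ] = p`,
`E[(1 - A) Π | ℋ] = 1 - p` and `E[Z | ℋ] = 0`; as `K e^c` is `ℋ`-measurable, the `c`-term has mean
zero whatever `c` is. The model says `e^{-β} E[U₁ | 𝒮] = E[U₀ | 𝒮]`, and `K` is `𝒮`-measurable, so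
the first term has mean zero as well. The two terms need not be integrable separately; they are
after truncating `K` to the `𝒮`-measurable sets `{|K| ≤ n, |K e^{-β}| ≤ n}`, which exhaust `Ω`.
-/

namespace MeasureTheory

variable {m m' m0 : MeasurableSpace Ω} {μ : Measure Ω}

theorem integral_mul_condExp (hm : m ≤ m0) [SigmaFinite (μ.trim hm)] {f g : Ω → ℝ}
    (hg : StronglyMeasurable[m] g) (hgf : Integrable (g * f) μ) (hf : Integrable f μ) :
    ∫ ω, g ω * f ω ∂μ = ∫ ω, g ω * μ[f|m] ω ∂μ :=
  (integral_condExp hm).symm.trans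
    (integral_congr_ae (condExp_mul_of_stronglyMeasurable_left hg hgf hf))

theorem condExp_mul_condExp (hmm' : m ≤ m') (hm' : m' ≤ m0) [SigmaFinite (μ.trim hm')]
    {f g : Ω → ℝ} (hg : StronglyMeasurable[m'] g) (hgf : Integrable (g * f) μ)
    (hf : Integrable f μ) :
    μ[g * μ[f|m']|m] =ᵐ[μ] μ[g * f|m] :=
  (condExp_congr_ae (condExp_mul_of_stronglyMeasurable_left hg hgf hf).symm).trans
    (condExp_condExp_of_le hmm' hm')

theorem condExp_mul_of_condExp_eq_one (hmm' : m ≤ m') (hm' : m' ≤ m0)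
    [SigmaFinite (μ.trim hm')] {f g : Ω → ℝ} (hg : StronglyMeasurable[m'] g)
    (hgf : Integrable (g * f) μ) (hf : Integrable f μ) (hf1 : μ[f|m'] =ᵐ[μ] 1) :
    μ[g * f|m] =ᵐ[μ] μ[g|m] := by
  refine (condExp_mul_condExp hmm' hm' hg hgf hf).symm.trans (condExp_congr_ae ?_)
  filter_upwards [hf1] with ω hω
  simp [hω]

theorem condExp_one_sub [IsFiniteMeasure μ] (hm : m ≤ m0) {f : Ω → ℝ} (hf : Integrable f μ) :
    μ[fun ω => 1 - f ω|m] =ᵐ[μ] fun ω => 1 - μ[f|m] ω := by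
  have h := condExp_sub (integrable_const (1 : ℝ)) hf m
  rw [condExp_const hm] at h
  exact h

theorem condExp_inv_mul_eq_one {f q : Ω → ℝ} (hq : StronglyMeasurable[m] q)
    (hf : Integrable f μ) (hqf : Integrable (fun ω => (q ω)⁻¹ * f ω) μ)
    (hfq : μ[f|m] =ᵐ[μ] q) (hq0 : ∀ᵐ ω ∂μ, q ω ≠ 0) :
    μ[fun ω => (q ω)⁻¹ * f ω|m] =ᵐ[μ] 1 := by
  filter_upwards [condExp_mul_of_stronglyMeasurable_left (f := fun ω => (q ω)⁻¹)
    hq.measurable.inv.stronglyMeasurable hqf hf, hfq, hq0] with ω h hfq hq0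
  rw [show (fun ω => (q ω)⁻¹ * f ω) = (fun ω => (q ω)⁻¹) * f from rfl, h, Pi.mul_apply, hfq,
    inv_mul_cancel₀ hq0, Pi.one_apply]

theorem condExp_one_sub_div_one_sub_condExp [IsFiniteMeasure μ] (hm : m ≤ m0) {f : Ω → ℝ}
    (hf : Integrable f μ) (hint : Integrable (fun ω => (1 - f ω) / (1 - μ[f|m] ω)) μ)
    (hne : ∀ᵐ ω ∂μ, μ[f|m] ω ≠ 1) :
    μ[fun ω => (1 - f ω) / (1 - μ[f|m] ω)|m] =ᵐ[μ] 1 := by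
  simp_rw [div_eq_inv_mul] at hint ⊢
  refine condExp_inv_mul_eq_one (stronglyMeasurable_const.sub stronglyMeasurable_condExp)
    ((integrable_const 1).sub hf) hint (condExp_one_sub hm hf) ?_
  filter_upwards [hne] with ω h
  exact sub_ne_zero.2 (Ne.symm h)

theorem integrable_mul_of_integrable_mul_condExp (hm : m ≤ m0) [SigmaFinite (μ.trim hm)]
    {f g : Ω → ℝ} (hf : Integrable f μ) (hf0 : 0 ≤ᵐ[μ] f) (hg : StronglyMeasurable[m] g)
    (hg0 : 0 ≤ᵐ[μ] g) (hgf : Integrable (fun ω => g ω * μ[f|m] ω) μ) :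
    Integrable (fun ω => g ω * f ω) μ := by
  set gₙ : ℕ → Ω → ℝ := fun n ω => min (g ω) n
  have hgₙ (n : ℕ) : StronglyMeasurable[m] (gₙ n) :=
    (hg.measurable.min measurable_const).stronglyMeasurable
  have hgₙ_bdd (n : ℕ) : ∀ᵐ ω ∂μ, ‖gₙ n ω‖ ≤ n := by
    filter_upwards [hg0] with ω h
    rw [Real.norm_of_nonneg (le_min h n.cast_nonneg)]
    exact min_le_right _ _
  have hint (n : ℕ) : Integrable (fun ω => gₙ n ω * f ω) μ :=
    hf.bdd_mul ((hgₙ n).mono hm).aestronglyMeasurable (hgₙ_bdd n)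
  have hnonneg (n : ℕ) : 0 ≤ᵐ[μ] fun ω => gₙ n ω * f ω := by
    filter_upwards [hg0, hf0] with ω hg hf
    exact mul_nonneg (le_min hg n.cast_nonneg) hf
  have hle (n : ℕ) : ∫ ω, gₙ n ω * f ω ∂μ ≤ ∫ ω, g ω * μ[f|m] ω ∂μ := by
    rw [integral_mul_condExp hm (hgₙ n) (hint n) hf]
    refine integral_mono_ae (integrable_condExp.bdd_mul
      ((hgₙ n).mono hm).aestronglyMeasurable (hgₙ_bdd n)) hgf ?_
    filter_upwards [condExp_nonneg hf0] with ω h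
    exact mul_le_mul_of_nonneg_right (min_le_left _ _) h
  have hlim : ∀ ω, Tendsto (fun n => ENNReal.ofReal (gₙ n ω * f ω)) atTop
      (nhds (ENNReal.ofReal (g ω * f ω))) := by
    intro ω
    refine tendsto_const_nhds.congr' ?_
    filter_upwards [eventually_ge_atTop ⌈g ω⌉₊] with n hn
    simp only [gₙ, min_eq_left ((Nat.le_ceil _).trans (Nat.cast_le.2 hn))]
  have hmono : ∀ᵐ ω ∂μ, Monotone fun n => ENNReal.ofReal (gₙ n ω * f ω) := by
    filter_upwards [hf0] with ω h a b hab
    exact ENNReal.ofReal_le_ofReal (mul_le_mul_of_nonneg_right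
      (min_le_min le_rfl (Nat.cast_le.2 hab)) h)
  refine ⟨(hg.mono hm).aestronglyMeasurable.mul hf.1, ?_⟩
  have hgf0 : 0 ≤ᵐ[μ] fun ω => g ω * f ω := by
    filter_upwards [hg0, hf0] with ω hg hf
    exact mul_nonneg hg hf
  rw [hasFiniteIntegral_iff_ofReal hgf0]
  refine lt_of_le_of_lt (b := ENNReal.ofReal (∫ ω, g ω * μ[f|m] ω ∂μ))
    (le_of_tendsto' (lintegral_tendsto_of_tendsto_of_monotone
      (fun n => (hint n).1.aemeasurable.ennreal_ofReal) hmono (ae_of_all _ hlim)) fun n => ?_)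
    ENNReal.ofReal_lt_top
  rw [← ofReal_integral_eq_lintegral_ofReal (hint n) (hnonneg n)]
  exact ENNReal.ofReal_le_ofReal (hle n)

theorem integrable_inv_mul_of_condExp_eq [IsFiniteMeasure μ] (hm : m ≤ m0) {f q : Ω → ℝ}
    (hf : Integrable f μ) (hf0 : 0 ≤ᵐ[μ] f) (hq : StronglyMeasurable[m] q)
    (hq0 : ∀ᵐ ω ∂μ, 0 < q ω) (hfq : μ[f|m] =ᵐ[μ] q) :
    Integrable (fun ω => (q ω)⁻¹ * f ω) μ := by
  refine integrable_mul_of_integrable_mul_condExp hm hf hf0 hq.measurable.inv.stronglyMeasurable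
    (by filter_upwards [hq0] with ω h using inv_nonneg.2 h.le)
    ((integrable_const (1 : ℝ)).congr ?_)
  filter_upwards [hfq, hq0] with ω h h0
  rw [h, inv_mul_cancel₀ h0.ne']

section Telescoping

variable {M : ℕ → MeasurableSpace Ω} {f : ℕ → Ω → ℝ} {C : ℝ}

theorem stronglyMeasurable_prod_Icc {n : ℕ}
    (hM : ∀ i j, 1 ≤ i → i ≤ j → j ≤ n + 1 → M i ≤ M j)
    (hf : ∀ j ∈ Finset.Icc 1 n, StronglyMeasurable[M (j + 1)] (f j)) :
    StronglyMeasurable[M (n + 1)] (fun ω => ∏ j ∈ Finset.Icc 1 n, f j ω) := by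
  refine Finset.stronglyMeasurable_fun_prod _ fun j hj => (hf j hj).mono ?_
  rw [Finset.mem_Icc] at hj
  exact hM _ _ (by omega) (by omega) (by omega)

theorem ae_abs_prod_Icc_le {n : ℕ} (hf : ∀ j ∈ Finset.Icc 1 n, ∀ᵐ ω ∂μ, |f j ω| ≤ C) :
    ∀ᵐ ω ∂μ, |∏ j ∈ Finset.Icc 1 n, f j ω| ≤ C ^ n := by
  filter_upwards [(eventually_all_finset _).2 hf] with ω h
  calc |∏ j ∈ Finset.Icc 1 n, f j ω| = ∏ j ∈ Finset.Icc 1 n, |f j ω| := Finset.abs_prod _ _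
    _ ≤ ∏ _j ∈ Finset.Icc 1 n, C := Finset.prod_le_prod (fun _ _ => abs_nonneg _) h
    _ = C ^ n := by rw [Finset.prod_const, Nat.card_Icc, Nat.add_sub_cancel]

theorem integrable_prod_Icc [IsFiniteMeasure μ] {n : ℕ}
    (hM : ∀ i j, 1 ≤ i → i ≤ j → j ≤ n + 1 → M i ≤ M j) (hMn : M (n + 1) ≤ m0)
    (hf : ∀ j ∈ Finset.Icc 1 n, StronglyMeasurable[M (j + 1)] (f j))
    (hfC : ∀ j ∈ Finset.Icc 1 n, ∀ᵐ ω ∂μ, |f j ω| ≤ C) :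
    Integrable (fun ω => ∏ j ∈ Finset.Icc 1 n, f j ω) μ :=
  .of_bound ((stronglyMeasurable_prod_Icc hM hf).mono hMn).aestronglyMeasurable (C ^ n)
    (ae_abs_prod_Icc_le hfC)

theorem condExp_prod_Icc_eq_one [IsFiniteMeasure μ] : ∀ {n : ℕ},
    (∀ i j, 1 ≤ i → i ≤ j → j ≤ n + 1 → M i ≤ M j) → M (n + 1) ≤ m0 →
    (∀ j ∈ Finset.Icc 1 n, StronglyMeasurable[M (j + 1)] (f j)) →
    (∀ j ∈ Finset.Icc 1 n, ∀ᵐ ω ∂μ, |f j ω| ≤ C) →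
    (∀ j ∈ Finset.Icc 1 n, μ[f j|M j] =ᵐ[μ] 1) →
    μ[fun ω => ∏ j ∈ Finset.Icc 1 n, f j ω|M 1] =ᵐ[μ] 1
  | 0, _, hM1, _, _, _ => by
    simp only [zero_add, Finset.Icc_eq_empty_of_lt zero_lt_one,
      Finset.prod_empty] at hM1 ⊢
    rw [condExp_const hM1]
    rfl
  | n + 1, hM, hMn, hf, hfC, hf1 => by
    have hsub : Finset.Icc 1 n ⊆ Finset.Icc 1 (n + 1) := Finset.Icc_subset_Icc_right n.le_succ
    have hlast : n + 1 ∈ Finset.Icc 1 (n + 1) := Finset.mem_Icc.2 ⟨by omega, le_rfl⟩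
    have hM' : ∀ i j, 1 ≤ i → i ≤ j → j ≤ n + 1 → M i ≤ M j :=
      fun i j hi hij hj => hM i j hi hij (by omega)
    have hMn' : M (n + 1) ≤ m0 := (hM _ _ (by omega) (by omega) le_rfl).trans hMn
    have hprod : (fun ω => ∏ j ∈ Finset.Icc 1 (n + 1), f j ω)
        = (fun ω => ∏ j ∈ Finset.Icc 1 n, f j ω) * f (n + 1) := by
      ext ω
      exact Finset.prod_Icc_succ_top (by omega) _
    have hint := integrable_prod_Icc hM hMn hf hfC
    rw [hprod] at hint ⊢
    refine (condExp_mul_of_condExp_eq_one (hM _ _ le_rfl (by omega) (by omega)) hMn'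
      (stronglyMeasurable_prod_Icc hM' fun j hj => hf j (hsub hj)) hint
      (.of_bound ((hf _ hlast).mono hMn).aestronglyMeasurable C (hfC _ hlast))
      (hf1 _ hlast)).trans ?_
    exact condExp_prod_Icc_eq_one hM' hMn' (fun j hj => hf j (hsub hj))
      (fun j hj => hfC j (hsub hj)) (fun j hj => hf1 j (hsub hj))

end Telescoping

section Weighting

variable [IsFiniteMeasure μ]

theorem integrable_and_condExp_inv_mul_sub_inv_mul_eq_zero (hmm' : m ≤ m') (hm' : m' ≤ m0)
    {a P : Ω → ℝ} (ha : Measurable[m'] a) (ha01 : ∀ ω, a ω = 0 ∨ a ω = 1)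
    (hP : Integrable P μ) (hP0 : 0 ≤ᵐ[μ] P) (hP1 : μ[P|m'] =ᵐ[μ] 1)
    (hp : ∀ᵐ ω ∂μ, 0 < μ[a|m] ω ∧ μ[a|m] ω < 1) :
    Integrable (fun ω => (μ[a|m] ω)⁻¹ * (a ω * P ω) - (1 - μ[a|m] ω)⁻¹ * ((1 - a ω) * P ω)) μ ∧
      μ[fun ω => (μ[a|m] ω)⁻¹ * (a ω * P ω) - (1 - μ[a|m] ω)⁻¹ * ((1 - a ω) * P ω)|m]
        =ᵐ[μ] 0 := by
  have hm : m ≤ m0 := hmm'.trans hm'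
  have ha₁ (ω : Ω) : 0 ≤ a ω ∧ 0 ≤ 1 - a ω ∧ ‖a ω‖ ≤ 1 ∧ ‖1 - a ω‖ ≤ 1 := by
    rcases ha01 ω with h | h <;> simp [h]
  have ha' : AEStronglyMeasurable a μ := (ha.mono hm' le_rfl).aestronglyMeasurable
  have h1a' : AEStronglyMeasurable (1 - a) μ :=
    ((measurable_const.sub ha).mono hm' le_rfl).aestronglyMeasurable
  have haP : Integrable (a * P) μ := hP.bdd_mul ha' (ae_of_all _ fun ω => (ha₁ ω).2.2.1)
  have h1aP : Integrable ((1 - a) * P) μ := hP.bdd_mul h1a' (ae_of_all _ fun ω => (ha₁ ω).2.2.2)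
  have hcaP : μ[a * P|m] =ᵐ[μ] μ[a|m] :=
    condExp_mul_of_condExp_eq_one hmm' hm' ha.stronglyMeasurable haP hP hP1
  have hc1aP : μ[(1 - a) * P|m] =ᵐ[μ] 1 - μ[a|m] :=
    (condExp_mul_of_condExp_eq_one hmm' hm' (measurable_const.sub ha).stronglyMeasurable h1aP hP
      hP1).trans (condExp_one_sub hm (.of_bound ha' 1 (ae_of_all _ fun ω => (ha₁ ω).2.2.1)))
  have hpm : StronglyMeasurable[m] μ[a|m] := stronglyMeasurable_condExp
  have hqm : StronglyMeasurable[m] (1 - μ[a|m]) := stronglyMeasurable_const.sub hpm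
  have hp0 : ∀ᵐ ω ∂μ, 0 < μ[a|m] ω := by filter_upwards [hp] with ω h using h.1
  have hq0 : ∀ᵐ ω ∂μ, 0 < (1 - μ[a|m]) ω := by filter_upwards [hp] with ω h using sub_pos.2 h.2
  have haP0 : 0 ≤ᵐ[μ] a * P := by filter_upwards [hP0] with ω h using mul_nonneg (ha₁ ω).1 h
  have h1aP0 : 0 ≤ᵐ[μ] (1 - a) * P := by
    filter_upwards [hP0] with ω h using mul_nonneg (ha₁ ω).2.1 h
  have hZ₁ := integrable_inv_mul_of_condExp_eq hm haP haP0 hpm hp0 hcaP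
  have hZ₀ := integrable_inv_mul_of_condExp_eq hm h1aP h1aP0 hqm hq0 hc1aP
  refine ⟨hZ₁.sub hZ₀, ?_⟩
  filter_upwards [condExp_sub hZ₁ hZ₀ m,
    condExp_inv_mul_eq_one hpm haP hZ₁ hcaP (by filter_upwards [hp0] with ω h using h.ne'),
    condExp_inv_mul_eq_one hqm h1aP hZ₀ hc1aP (by filter_upwards [hq0] with ω h using h.ne')]
    with ω h h₁ h₀
  exact h.trans (by rw [Pi.sub_apply, h₁, h₀, sub_self]; rfl)

end Weighting

section Unbiasedness

variable [IsFiniteMeasure μ] {K w e U₁ U₀ Z : Ω → ℝ}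

theorem integral_mul_sub_sub_eq_zero_of_bounded (hmm' : m ≤ m') (hm' : m' ≤ m0) {C : ℝ}
    (hK : StronglyMeasurable[m] K) (hw : StronglyMeasurable[m] w)
    (he : StronglyMeasurable[m'] e) (hKC : ∀ᵐ ω ∂μ, |K ω| ≤ C)
    (hKwC : ∀ᵐ ω ∂μ, |K ω * w ω| ≤ C) (hU₁ : Integrable U₁ μ) (hU₀ : Integrable U₀ μ)
    (hZ : Integrable Z μ) (hwU : w * μ[U₁|m] =ᵐ[μ] μ[U₀|m]) (hZ0 : μ[Z|m'] =ᵐ[μ] 0)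
    (hF : Integrable (fun ω => K ω * (w ω * U₁ ω - U₀ ω - e ω * Z ω)) μ) :
    ∫ ω, K ω * (w ω * U₁ ω - U₀ ω - e ω * Z ω) ∂μ = 0 := by
  have hm : m ≤ m0 := hmm'.trans hm'
  have hKw : StronglyMeasurable[m] (K * w) := hK.mul hw
  have hKwU₁ : Integrable (fun ω => (K * w) ω * U₁ ω) μ :=
    hU₁.bdd_mul (hKw.mono hm).aestronglyMeasurable hKwC
  have hKU₀ : Integrable (fun ω => K ω * U₀ ω) μ :=
    hU₀.bdd_mul (hK.mono hm).aestronglyMeasurable hKC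
  have hKeZ : Integrable (fun ω => (K * e) ω * Z ω) μ :=
    ((hKwU₁.sub hKU₀).sub hF).congr (ae_of_all _ fun ω => by
      simp only [Pi.mul_apply, Pi.sub_apply]; ring)
  have hY : ∫ ω, (K * w) ω * U₁ ω ∂μ = ∫ ω, K ω * U₀ ω ∂μ := calc
    _ = ∫ ω, (K * w) ω * μ[U₁|m] ω ∂μ := integral_mul_condExp hm hKw hKwU₁ hU₁
    _ = ∫ ω, K ω * μ[U₀|m] ω ∂μ := integral_congr_ae <| by
      filter_upwards [hwU] with ω h
      rw [← h, Pi.mul_apply, Pi.mul_apply, mul_assoc]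
    _ = ∫ ω, K ω * U₀ ω ∂μ := (integral_mul_condExp hm hK hKU₀ hU₀).symm
  have hZ : ∫ ω, (K * e) ω * Z ω ∂μ = 0 := by
    rw [integral_mul_condExp hm' ((hK.mono hmm').mul he) hKeZ hZ]
    exact integral_eq_zero_of_ae (by filter_upwards [hZ0] with ω h; simp [h])
  have hsplit : (fun ω => K ω * (w ω * U₁ ω - U₀ ω - e ω * Z ω))
      = fun ω => (K * w) ω * U₁ ω - K ω * U₀ ω - (K * e) ω * Z ω := by
    ext ω; simp only [Pi.mul_apply]; ring
  have hKwU₁_sub_KU₀ : Integrable (fun ω => (K * w) ω * U₁ ω - K ω * U₀ ω) μ := hKwU₁.sub hKU₀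
  rw [hsplit, integral_sub hKwU₁_sub_KU₀ hKeZ, integral_sub hKwU₁ hKU₀, hY, hZ, sub_self,
    sub_zero]

theorem integral_mul_sub_sub_eq_zero (hmm' : m ≤ m') (hm' : m' ≤ m0)
    (hK : StronglyMeasurable[m] K) (hw : StronglyMeasurable[m] w)
    (he : StronglyMeasurable[m'] e) (hU₁ : Integrable U₁ μ) (hU₀ : Integrable U₀ μ)
    (hZ : Integrable Z μ) (hwU : w * μ[U₁|m] =ᵐ[μ] μ[U₀|m]) (hZ0 : μ[Z|m'] =ᵐ[μ] 0)
    (hF : Integrable (fun ω => K ω * (w ω * U₁ ω - U₀ ω - e ω * Z ω)) μ) :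
    ∫ ω, K ω * (w ω * U₁ ω - U₀ ω - e ω * Z ω) ∂μ = 0 := by
  have hm : m ≤ m0 := hmm'.trans hm'
  set D : ℕ → Set Ω := fun n => {ω | |K ω| ≤ n} ∩ {ω | |K ω * w ω| ≤ n}
  have hD (n : ℕ) : MeasurableSet[m] (D n) :=
    ((continuous_abs.comp_stronglyMeasurable hK).measurable measurableSet_Iic).inter
      ((continuous_abs.comp_stronglyMeasurable (hK.mul hw)).measurable measurableSet_Iic)
  have hDmono : Monotone D := fun a b hab =>
    Set.inter_subset_inter (fun ω (h : |K ω| ≤ a) => h.trans (Nat.cast_le.2 hab))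
      (fun ω (h : |K ω * w ω| ≤ a) => h.trans (Nat.cast_le.2 hab))
  have hDunion : ⋃ n, D n = Set.univ := Set.eq_univ_of_forall fun ω => by
    obtain ⟨n, hn⟩ := exists_nat_ge (max |K ω| |K ω * w ω|)
    exact Set.mem_iUnion.2 ⟨n, (max_le_iff.1 hn).1, (max_le_iff.1 hn).2⟩
  have hzero (n : ℕ) : ∫ ω in D n, K ω * (w ω * U₁ ω - U₀ ω - e ω * Z ω) ∂μ = 0 := by
    rw [← integral_indicator (hm _ (hD n))]
    simp_rw [Set.indicator_mul_left]
    refine integral_mul_sub_sub_eq_zero_of_bounded (C := n) hmm' hm' (hK.indicator (hD n)) hw he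
      (ae_of_all _ fun ω => ?_) (ae_of_all _ fun ω => ?_) hU₁ hU₀ hZ hwU hZ0 ?_
    · by_cases h : ω ∈ D n
      · simpa [Set.indicator_of_mem h] using h.1
      · simp [Set.indicator_of_notMem h]
    · by_cases h : ω ∈ D n
      · simpa [Set.indicator_of_mem h] using h.2
      · simp [Set.indicator_of_notMem h]
    · exact (hF.indicator (hm _ (hD n))).congr
        (ae_of_all _ fun ω => Set.indicator_mul_left _ _ _)
  have hlim := tendsto_setIntegral_of_monotone (fun n => hm _ (hD n)) hDmono hF.integrableOn
  rw [hDunion, setIntegral_univ] at hlim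
  exact tendsto_nhds_unique hlim (by simp_rw [hzero]; exact tendsto_const_nhds)

end Unbiasedness

end MeasureTheory

theorem one_sub_div_one_sub_mem_Icc {a q δ : ℝ} (ha : a = 0 ∨ a = 1) (hδ : 0 < δ)
    (hq : q ≤ 1 - δ) : (1 - a) / (1 - q) ∈ Set.Icc 0 δ⁻¹ := by
  rcases ha with rfl | rfl
  · rw [sub_zero, one_div]
    exact ⟨inv_nonneg.2 (by linarith), inv_anti₀ hδ (by linarith)⟩
  · simp [hδ.le]

section PiProd

variable {m0 : MeasurableSpace Ω} {μ : Measure Ω} {M : ℕ → MeasurableSpace Ω}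
  {Δ : ℕ} {Aseq : ℕ → Ω → ℝ} {δ : ℝ}

theorem ae_one_sub_div_one_sub_condExp_mem_Icc
    (hAseq01 : ∀ j ∈ Finset.Icc 1 (Δ - 1), ∀ ω, Aseq j ω = 0 ∨ Aseq j ω = 1) (hδ : 0 < δ)
    (hpj : ∀ j ∈ Finset.Icc 1 (Δ - 1), ∀ᵐ ω ∂μ, (μ[Aseq j|M j]) ω ≤ 1 - δ) :
    ∀ j ∈ Finset.Icc 1 (Δ - 1), ∀ᵐ ω ∂μ,
      (1 - Aseq j ω) / (1 - (μ[Aseq j|M j]) ω) ∈ Set.Icc 0 δ⁻¹ := fun j hj => by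
  filter_upwards [hpj j hj] with ω h
  exact one_sub_div_one_sub_mem_Icc (hAseq01 j hj ω) hδ h

theorem PiProd_nonneg_ae
    (hAseq01 : ∀ j ∈ Finset.Icc 1 (Δ - 1), ∀ ω, Aseq j ω = 0 ∨ Aseq j ω = 1) (hδ : 0 < δ)
    (hpj : ∀ j ∈ Finset.Icc 1 (Δ - 1), ∀ᵐ ω ∂μ, (μ[Aseq j|M j]) ω ≤ 1 - δ) :
    0 ≤ᵐ[μ] PiProd μ M Δ Aseq := by
  filter_upwards [(eventually_all_finset _).2
    (ae_one_sub_div_one_sub_condExp_mem_Icc hAseq01 hδ hpj)] with ω h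
  exact Finset.prod_nonneg fun j hj => (h j hj).1

theorem integrable_PiProd_and_condExp_PiProd_eq_one [IsFiniteMeasure μ] (hΔ : 1 ≤ Δ)
    (hMmono : ∀ j k, 1 ≤ j → j ≤ k → k ≤ Δ → M j ≤ M k) (hMΔ : M Δ = m0)
    (hAseq : ∀ j ∈ Finset.Icc 1 (Δ - 1), Measurable[M (j + 1)] (Aseq j))
    (hAseq01 : ∀ j ∈ Finset.Icc 1 (Δ - 1), ∀ ω, Aseq j ω = 0 ∨ Aseq j ω = 1) (hδ : 0 < δ)
    (hpj : ∀ j ∈ Finset.Icc 1 (Δ - 1), ∀ᵐ ω ∂μ, (μ[Aseq j|M j]) ω ≤ 1 - δ) :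
    Integrable (PiProd μ M Δ Aseq) μ ∧ μ[PiProd μ M Δ Aseq|M 1] =ᵐ[μ] 1 := by
  have hM : ∀ i j, 1 ≤ i → i ≤ j → j ≤ Δ - 1 + 1 → M i ≤ M j := by
    rwa [Nat.sub_add_cancel hΔ]
  have hMn : M (Δ - 1 + 1) ≤ m0 := by rw [Nat.sub_add_cancel hΔ, hMΔ]
  have hMle : ∀ j ∈ Finset.Icc 1 (Δ - 1), M j ≤ M (j + 1) ∧ M (j + 1) ≤ m0 := fun j hj => by
    rw [Finset.mem_Icc] at hj
    exact ⟨hM _ _ hj.1 (by omega) (by omega), (hM _ _ (by omega) (by omega) le_rfl).trans hMn⟩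
  have hbdd := ae_one_sub_div_one_sub_condExp_mem_Icc hAseq01 hδ hpj
  have habs : ∀ j ∈ Finset.Icc 1 (Δ - 1), ∀ᵐ ω ∂μ,
      |(1 - Aseq j ω) / (1 - (μ[Aseq j|M j]) ω)| ≤ δ⁻¹ := fun j hj => by
    filter_upwards [hbdd j hj] with ω h
    exact (abs_of_nonneg h.1).le.trans h.2
  have hmeas : ∀ j ∈ Finset.Icc 1 (Δ - 1), StronglyMeasurable[M (j + 1)]
      (fun ω => (1 - Aseq j ω) / (1 - (μ[Aseq j|M j]) ω)) := fun j hj =>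
    ((measurable_const.sub (hAseq j hj)).div (measurable_const.sub
      (stronglyMeasurable_condExp.measurable.mono (hMle j hj).1 le_rfl))).stronglyMeasurable
  refine ⟨integrable_prod_Icc hM hMn hmeas habs, condExp_prod_Icc_eq_one hM hMn hmeas habs ?_⟩
  intro j hj
  have hA : Integrable (Aseq j) μ := .of_bound
    ((hAseq j hj).mono (hMle j hj).2 le_rfl).aestronglyMeasurable 1
    (ae_of_all _ fun ω => by rcases hAseq01 j hj ω with h | h <;> simp [h])
  refine condExp_one_sub_div_one_sub_condExp ((hMle j hj).1.trans (hMle j hj).2) hA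
    (.of_bound ((hmeas j hj).mono (hMle j hj).2).aestronglyMeasurable _ (habs j hj)) ?_
  filter_upwards [hpj j hj] with ω h
  linarith

end PiProd

theorem exp_mul_sub_mul_weight_eq {a b c y q p P s : ℝ} (ha : a = 0 ∨ a = 1) :
    exp (-(a * b)) * (y - exp (c + a * b)) *
        ((q / p) ^ a * ((1 - q) / (1 - p)) ^ (1 - a) * P) * (a - q) * s =
      q * (1 - q) * s * (exp (-b) * (p⁻¹ * (a * P * y)) - (1 - p)⁻¹ * ((1 - a) * P * y) -
        exp c * (p⁻¹ * (a * P) - (1 - p)⁻¹ * ((1 - a) * P))) := by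
  rcases ha with rfl | rfl
  · simp only [zero_mul, neg_zero, exp_zero, add_zero, sub_zero, rpow_zero, rpow_one]
    ring
  · have hexp : exp (-b) * exp (c + b) = exp c := by rw [← exp_add]; ring_nf
    simp only [one_mul, sub_self, rpow_zero, rpow_one, mul_one]
    linear_combination (-(q / p) * P * (1 - q) * s) * hexp

theorem marginal_estimating_function_mean_zero
    {m0 : MeasurableSpace Ω} (μ : Measure Ω) [IsProbabilityMeasure μ]
    (Δ : ℕ) (hΔ : 1 ≤ Δ)
    (mS mH : MeasurableSpace Ω) (M : ℕ → MeasurableSpace Ω)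
    (hSH : mS ≤ mH) (hHM : mH ≤ M 1)
    (hMmono : ∀ j k, 1 ≤ j → j ≤ k → k ≤ Δ → M j ≤ M k)
    (hMΔ : M Δ = m0)
    (A : Ω → ℝ) (hA : Measurable[M 1] A) (hA01 : ∀ ω, A ω = 0 ∨ A ω = 1)
    (hp : ∀ᵐ ω ∂μ, 0 < (μ[A|mH]) ω ∧ (μ[A|mH]) ω < 1)
    (Aseq : ℕ → Ω → ℝ)
    (hAseq : ∀ j ∈ Finset.Icc 1 (Δ - 1), Measurable[M (j + 1)] (Aseq j))
    (hAseq01 : ∀ j ∈ Finset.Icc 1 (Δ - 1), ∀ ω, Aseq j ω = 0 ∨ Aseq j ω = 1)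
    (δ : ℝ) (hδ : 0 < δ)
    (hpj : ∀ j ∈ Finset.Icc 1 (Δ - 1), ∀ᵐ ω ∂μ, (μ[Aseq j|M j]) ω ≤ 1 - δ)
    (Y : Ω → ℝ) (hY0 : ∀ ω, 0 ≤ Y ω)
    (ptil : Ω → ℝ) (hptilmeas : StronglyMeasurable[mS] ptil)
    (β : Ω → ℝ) (hβ : StronglyMeasurable[mS] β)
    (hmodel : (fun ω => exp (-(β ω)) *
        (μ[(fun ω' => ((μ[A|mH]) ω')⁻¹ *
          (μ[(fun ω'' => A ω'' * PiProd μ M Δ Aseq ω'' * Y ω'')|mH]) ω')|mS]) ω)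
      =ᵐ[μ]
      μ[(fun ω' => (1 - (μ[A|mH]) ω')⁻¹ *
          (μ[(fun ω'' => (1 - A ω'') * PiProd μ M Δ Aseq ω'' * Y ω'')|mH]) ω')|mS])
    (c : Ω → ℝ) (hc : StronglyMeasurable[mH] c)
    (S : Ω → ℝ) (hS : StronglyMeasurable[mS] S)
    (hint1 : Integrable (fun ω => A ω * PiProd μ M Δ Aseq ω * Y ω) μ)
    (hint0 : Integrable (fun ω => (1 - A ω) * PiProd μ M Δ Aseq ω * Y ω) μ)
    (hintObs1 : Integrable (fun ω => ((μ[A|mH]) ω)⁻¹ *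
      (μ[(fun ω'' => A ω'' * PiProd μ M Δ Aseq ω'' * Y ω'')|mH]) ω) μ)
    (hintObs0 : Integrable (fun ω => (1 - (μ[A|mH]) ω)⁻¹ *
      (μ[(fun ω'' => (1 - A ω'') * PiProd μ M Δ Aseq ω'' * Y ω'')|mH]) ω) μ)
    (hintMain : Integrable (fun ω => exp (-(A ω * β ω)) *
      (Y ω - exp (c ω + A ω * β ω)) * Jweight μ mH M Δ A Aseq ptil ω *
      (A ω - ptil ω) * S ω) μ) :
    ∫ ω, exp (-(A ω * β ω)) * (Y ω - exp (c ω + A ω * β ω)) *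
      Jweight μ mH M Δ A Aseq ptil ω * (A ω - ptil ω) * S ω ∂μ = 0 := by
  have hM1 : M 1 ≤ m0 := hMΔ ▸ hMmono 1 Δ le_rfl hΔ le_rfl
  have hH : mH ≤ m0 := hHM.trans hM1
  set p := μ[A|mH]
  set P := PiProd μ M Δ Aseq
  obtain ⟨hP, hP1⟩ :=
    integrable_PiProd_and_condExp_PiProd_eq_one hΔ hMmono hMΔ hAseq hAseq01 hδ hpj
  have hP0 : 0 ≤ᵐ[μ] P := PiProd_nonneg_ae hAseq01 hδ hpj
  obtain ⟨hZ, hZ0⟩ :=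
    integrable_and_condExp_inv_mul_sub_inv_mul_eq_zero hHM hM1 hA hA01 hP hP0 hP1 hp
  have hA₀ (ω : Ω) : 0 ≤ A ω ∧ 0 ≤ 1 - A ω := by rcases hA01 ω with h | h <;> simp [h]
  have hp₁ : StronglyMeasurable[mH] p⁻¹ :=
    stronglyMeasurable_condExp.measurable.inv.stronglyMeasurable
  have hp₀ : StronglyMeasurable[mH] (1 - p)⁻¹ :=
    (measurable_const.sub stronglyMeasurable_condExp.measurable).inv.stronglyMeasurable
  have hU₁ := integrable_mul_of_integrable_mul_condExp hH hint1
    (by filter_upwards [hP0] with ω h using mul_nonneg (mul_nonneg (hA₀ ω).1 h) (hY0 ω)) hp₁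
    (by filter_upwards [hp] with ω h using inv_nonneg.2 h.1.le) hintObs1
  have hU₀ := integrable_mul_of_integrable_mul_condExp hH hint0
    (by filter_upwards [hP0] with ω h using mul_nonneg (mul_nonneg (hA₀ ω).2 h) (hY0 ω)) hp₀
    (by filter_upwards [hp] with ω h using inv_nonneg.2 (sub_pos.2 h.2).le) hintObs0
  have hwU : (fun ω => exp (-β ω)) * μ[fun ω => (p ω)⁻¹ * (A ω * P ω * Y ω)|mS]
      =ᵐ[μ] μ[fun ω => (1 - p ω)⁻¹ * ((1 - A ω) * P ω * Y ω)|mS] := by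
    filter_upwards [hmodel, condExp_mul_condExp hSH hH hp₁ hU₁ hint1,
      condExp_mul_condExp hSH hH hp₀ hU₀ hint0] with ω hω h₁ h₀
    exact (congrArg (exp (-β ω) * ·) h₁.symm).trans (hω.trans h₀)
  have hsplit := ae_of_all μ fun ω => exp_mul_sub_mul_weight_eq (b := β ω) (c := c ω) (y := Y ω)
    (q := ptil ω) (p := p ω) (P := P ω) (s := S ω) (hA01 ω)
  exact (integral_congr_ae hsplit).trans (integral_mul_sub_sub_eq_zero
    (K := fun ω => ptil ω * (1 - ptil ω) * S ω) (w := fun ω => exp (-β ω))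
    (e := fun ω => exp (c ω)) hSH hH
    ((hptilmeas.mul (stronglyMeasurable_const.sub hptilmeas)).mul hS)
    (continuous_exp.comp_stronglyMeasurable hβ.neg) (continuous_exp.comp_stronglyMeasurable hc)
    hU₁ hU₀ hZ hwU hZ0 (hintMain.congr hsplit))
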